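/- arXiv:2510.03672 — 2 statements merged into one kernel-verified Lean document; each statement's English description precedes it below -/
import Mathlib

section
/- For every integer n ≥ 1, S(n) ≤ (3/8) · τ(n)² · log n, where S(n) := ∑_{i=1}^{τ(n)} (i − 1) · log d_i and 1 = d_1 < d_2 < ⋯ < d_{τ(n)} = n are the positive divisors of n in increasing order. -/
open Finset
open scoped Classical

noncomputable section

/-- Number of positive divisors of `n`. -/
def tau (n : ℕ) : ℕ := n.divisors.card

/-- The positive divisors of `n` in increasing order. -/
def sortedDivisors (n : ℕ) : List ℕ := n.divisors.sort (· ≤ ·)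

/-- The `i`-th divisor of `n` (1-based): `dvs n 1 = 1`, ..., `dvs n (tau n) = n`. -/
def dvs (n i : ℕ) : ℕ := (sortedDivisors n).getD (i - 1) 0

/-- `S(n) = ∑_{i=1}^{τ(n)} (i-1) log d_i`. -/
noncomputable def Sfun (n : ℕ) : ℝ :=
  ∑ i ∈ Finset.Icc 1 (tau n), ((i : ℝ) - 1) * Real.log (dvs n i)

/-- `V(n) = ∏_{1 ≤ i < j ≤ τ(n)} (d_j - d_i)`. -/
noncomputable def Vfun (n : ℕ) : ℝ :=
  ∏ j ∈ Finset.Icc 1 (tau n), ∏ i ∈ Finset.Ico 1 j, ((dvs n j : ℝ) - (dvs n i : ℝ))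

/-- `Ω₂(n) = ∑_{p^α ∥ n} α²`. -/
def Omega2 (n : ℕ) : ℕ := ∑ p ∈ n.primeFactors, (n.factorization p) ^ 2

/-!
The involution `d ↦ n / d` reverses the sorted list of divisors, so `g i := log d_{i+1}` satisfies
`g i + g (τ - 1 - i) = log n` and `0 ≤ g i ≤ log n`. Adding `S = ∑ i g i` to its reflection
`S = ∑ (τ - 1 - i) (log n - g i)`, each summand `i x + (τ - 1 - i)(log n - x)` with
`x ∈ [0, log n]` is at most `max i (τ - 1 - i) · log n`, and `∑_{i < τ} max i (τ - 1 - i) ≤ 3τ²/4`.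
-/

theorem four_mul_sum_range_max_le (K : ℕ) :
    4 * ∑ i ∈ range K, max i (K - 1 - i) ≤ 3 * K ^ 2 := by
  induction K using Nat.twoStepInduction with
  | zero => simp
  | one => simp
  | more K ih _ =>
    have hstep : ∑ i ∈ range (K + 2), max i (K + 2 - 1 - i)
        = ∑ i ∈ range K, max i (K - 1 - i) + 3 * K + 2 := by
      rw [sum_range_succ', sum_range_succ]
      have hshift : ∀ i ∈ range K, max (i + 1) (K + 2 - 1 - (i + 1)) = max i (K - 1 - i) + 1 :=
        fun i hi => by have := mem_range.mp hi; omega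
      rw [sum_congr rfl hshift, sum_add_distrib, sum_const, card_range, smul_eq_mul]
      omega
    rw [hstep]
    nlinarith

theorem mul_add_mul_sub_le_max_mul {a b x L : ℝ} (hx₀ : 0 ≤ x) (hxL : x ≤ L) :
    a * x + b * (L - x) ≤ max a b * L :=
  calc a * x + b * (L - x) ≤ max a b * x + max a b * (L - x) :=
        add_le_add (mul_le_mul_of_nonneg_right (le_max_left a b) hx₀)
          (mul_le_mul_of_nonneg_right (le_max_right a b) (sub_nonneg.mpr hxL))
    _ = max a b * L := by ring

theorem sum_range_mul_le_of_add_reflect_eq {K : ℕ} {L : ℝ} (g : ℕ → ℝ)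
    (hle : ∀ i < K, g i ≤ L) (hreflect : ∀ i < K, g i + g (K - 1 - i) = L) :
    ∑ i ∈ range K, (i : ℝ) * g i ≤ 3 / 8 * (K : ℝ) ^ 2 * L := by
  obtain rfl | hK := K.eq_zero_or_pos
  · simp
  have hg₀ : ∀ i < K, 0 ≤ g i := fun i hi => by
    linarith [hreflect i hi, hle (K - 1 - i) (by omega)]
  have hL : 0 ≤ L := (hg₀ 0 hK).trans (hle 0 hK)
  have hS : ∑ i ∈ range K, (i : ℝ) * g i = ∑ i ∈ range K, ((K - 1 - i : ℕ) : ℝ) * (L - g i) :=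
    calc ∑ i ∈ range K, (i : ℝ) * g i = ∑ i ∈ range K, ((K - 1 - i : ℕ) : ℝ) * g (K - 1 - i) :=
          (sum_range_reflect (fun i => (i : ℝ) * g i) K).symm
      _ = _ := sum_congr rfl fun i hi => by rw [← hreflect i (mem_range.mp hi)]; ring
  have hpaired : 2 * ∑ i ∈ range K, (i : ℝ) * g i
      ≤ ((∑ i ∈ range K, max i (K - 1 - i) : ℕ) : ℝ) * L :=
    calc 2 * ∑ i ∈ range K, (i : ℝ) * g i
        = ∑ i ∈ range K, ((i : ℝ) * g i + ((K - 1 - i : ℕ) : ℝ) * (L - g i)) := by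
          rw [sum_add_distrib, ← hS]; ring
      _ ≤ ∑ i ∈ range K, ((max i (K - 1 - i) : ℕ) : ℝ) * L := sum_le_sum fun i hi => by
          have hi := mem_range.mp hi
          rw [Nat.cast_max]
          exact mul_add_mul_sub_le_max_mul (hg₀ i hi) (hle i hi)
      _ = _ := by rw [← sum_mul, Nat.cast_sum]
  have hmax : 4 * ((∑ i ∈ range K, max i (K - 1 - i) : ℕ) : ℝ) ≤ 3 * (K : ℝ) ^ 2 := by
    exact_mod_cast four_mul_sum_range_max_le K
  linarith [mul_le_mul_of_nonneg_right hmax hL]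

theorem sortedDivisors_eq_reverse_map_div {n : ℕ} (hn : n ≠ 0) :
    sortedDivisors n = ((sortedDivisors n).map (n / ·)).reverse := by
  have hinv : Set.LeftInvOn (n / ·) (n / ·) n.divisors := fun d hd =>
    Nat.div_div_self (Nat.dvd_of_mem_divisors hd) hn
  have hperm : ((sortedDivisors n).map (n / ·)).reverse.Perm (sortedDivisors n) := by
    refine (List.reverse_perm _).trans (Multiset.coe_eq_coe.mp ?_)
    rw [← Multiset.map_coe, sortedDivisors, sort_eq, ← image_val_of_injOn hinv.injOn,
      Nat.image_div_divisors_eq_divisors]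
  refine (List.Perm.eq_of_pairwise' ?_ (pairwise_sort _ _) hperm).symm
  rw [List.pairwise_reverse, List.pairwise_map]
  exact (List.sortedLT_iff_pairwise.mp (sortedLT_sort _)).imp_of_mem fun ha _ hab =>
    Nat.div_le_div_left hab.le (Nat.pos_of_mem_divisors ((mem_sort _).mp ha))

theorem dvs_mem_divisors (n : ℕ) {i : ℕ} (h₁ : 1 ≤ i) (h₂ : i ≤ tau n) :
    dvs n i ∈ n.divisors := by
  have hlt : i - 1 < (sortedDivisors n).length := by
    rw [sortedDivisors, length_sort]; unfold tau at h₂; omega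
  rw [dvs, List.getD_eq_getElem _ _ hlt]
  exact (mem_sort _).mp (List.getElem_mem hlt)

theorem dvs_mul_dvs_reflect {n i : ℕ} (hn : n ≠ 0) (hi : i < tau n) :
    dvs n (i + 1) * dvs n (tau n - i) = n := by
  have hlen : (sortedDivisors n).length = tau n := length_sort _
  have hlt : i < (sortedDivisors n).length := by omega
  have hlt' : tau n - i - 1 < (sortedDivisors n).length := by omega
  have hcomplement : dvs n (i + 1) = n / dvs n (tau n - i) := by
    rw [dvs, dvs, Nat.add_sub_cancel, List.getD_eq_getElem _ _ hlt,
      List.getD_eq_getElem _ _ hlt', List.getElem_of_eq (sortedDivisors_eq_reverse_map_div hn) hlt,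
      List.getElem_reverse, List.getElem_map]
    simp only [List.length_map, hlen, Nat.sub_right_comm]
  rw [hcomplement,
    Nat.div_mul_cancel (Nat.dvd_of_mem_divisors (dvs_mem_divisors n (by omega) (by omega)))]

theorem Sfun_eq_sum_range (n : ℕ) :
    Sfun n = ∑ i ∈ range (tau n), (i : ℝ) * Real.log (dvs n (i + 1)) := by
  rw [Sfun, ← Ico_add_one_right_eq_Icc, sum_Ico_eq_sum_range]
  refine sum_congr rfl fun i _ => ?_
  rw [add_comm 1 i]
  push_cast
  ring

theorem S_upper (n : ℕ) (hn : 1 ≤ n) :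
    Sfun n ≤ 3 / 8 * (tau n : ℝ) ^ 2 * Real.log n := by
  have hn₀ : n ≠ 0 := Nat.one_le_iff_ne_zero.mp hn
  have hdvs : ∀ i < tau n, dvs n (i + 1) ∈ n.divisors := fun i hi =>
    dvs_mem_divisors n (Nat.le_add_left 1 i) hi
  rw [Sfun_eq_sum_range]
  refine sum_range_mul_le_of_add_reflect_eq _ (fun i hi => ?_) (fun i hi => ?_)
  · exact Real.log_le_log (by exact_mod_cast Nat.pos_of_mem_divisors (hdvs i hi))
      (by exact_mod_cast Nat.divisor_le (hdvs i hi))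
  · have hj : tau n - 1 - i < tau n := by omega
    have hjs : tau n - 1 - i + 1 = tau n - i := by omega
    rw [← Real.log_mul (by exact_mod_cast (Nat.pos_of_mem_divisors (hdvs i hi)).ne')
      (by exact_mod_cast (Nat.pos_of_mem_divisors (hdvs _ hj)).ne'), ← Nat.cast_mul, hjs,
      dvs_mul_dvs_reflect hn₀ hi]
end
end

section
/- For every integer n ≥ 2 and every real δ with 0 < δ ≤ 1/2, the number of positive divisors d of n with |log d − (log n)/2| ≥ δ · log n is at most (1/(δ · log n)²) · τ(n) · ∑_{p^α ∥ n} (log p^α)² · (α + 2)/(12α), where the sum is over the prime powers p^α exactly dividing n. -/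
/-!
Chebyshev's inequality: every far divisor contributes at least `(δ log n)²` to
`D(n) = ∑_{d ∣ n} (log d - log n / 2)²`, so it suffices to compute `D(n)`.
For coprime `a, b` the divisors of `ab` are the products `xy` with `x ∣ a`, `y ∣ b`, and the
centred logarithm of `xy` is the sum of those of `x` and `y`; the cross terms vanish because the
centred logarithms of the divisors of `b` sum to zero (pair `y` with `b / y`). Hence
`D(ab) = τ(b) D(a) + τ(a) D(b)`. For `n = p^α` the centred logarithms are `(i - α/2) log p`,
`0 ≤ i ≤ α`, and `∑ (i - α/2)² = (α + 1) α (α + 2) / 12`.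
-/

open Finset
open scoped Classical

noncomputable section

theorem Finset.card_filter_le_sum_sq_div {ι : Type*} (s : Finset ι) (f : ι → ℝ) {ε : ℝ}
    (hε : 0 < ε) :
    (#(s.filter fun i => ε ≤ |f i|) : ℝ) ≤ (∑ i ∈ s, f i ^ 2) / ε ^ 2 := by
  rw [le_div_iff₀ (by positivity), ← nsmul_eq_mul]
  calc #(s.filter fun i => ε ≤ |f i|) • ε ^ 2
      ≤ ∑ i ∈ s.filter (fun i => ε ≤ |f i|), f i ^ 2 :=
        card_nsmul_le_sum _ _ _ fun i hi =>
          sq_abs (f i) ▸ pow_le_pow_left₀ hε.le (mem_filter.mp hi).2 2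
    _ ≤ ∑ i ∈ s, f i ^ 2 :=
        sum_le_sum_of_subset_of_nonneg (filter_subset _ _) fun _ _ _ => sq_nonneg _

theorem Finset.sum_sum_add_sq_of_sum_eq_zero {ι κ R : Type*} [CommSemiring R] (s : Finset ι)
    (t : Finset κ) (u : ι → R) (v : κ → R) (hv : ∑ y ∈ t, v y = 0) :
    ∑ x ∈ s, ∑ y ∈ t, (u x + v y) ^ 2
      = #t * ∑ x ∈ s, u x ^ 2 + #s * ∑ y ∈ t, v y ^ 2 := by
  have cross : ∑ x ∈ s, ∑ y ∈ t, 2 * u x * v y = 0 := by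
    simp_rw [← mul_sum, hv, mul_zero, sum_const_zero]
  simp_rw [add_sq, sum_add_distrib, cross, sum_const, nsmul_eq_mul, mul_sum, add_zero]

theorem sum_range_sub_sq (m : ℕ) (c : ℝ) :
    ∑ i ∈ range m, ((i : ℝ) - c) ^ 2
      = m * (m - 1) * (2 * m - 1) / 6 - c * m * (m - 1) + m * c ^ 2 := by
  induction m with
  | zero => simp
  | succ m ih => rw [sum_range_succ, ih]; push_cast; ring

theorem Nat.Coprime.sum_divisors_mul_eq_sum_sum {M : Type*} [AddCommMonoid M] {m n : ℕ}
    (h : m.Coprime n) (f : ℕ → M) :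
    ∑ d ∈ (m * n).divisors, f d = ∑ a ∈ m.divisors, ∑ b ∈ n.divisors, f (a * b) := by
  rw [Nat.divisors_mul, ← image_mul_product, sum_image h.mul_injOn_divisors, sum_product]

theorem sum_divisors_log_sub_half (n : ℕ) :
    ∑ d ∈ n.divisors, (Real.log d - Real.log n / 2) = 0 := by
  have hflip : ∀ d ∈ n.divisors,
      Real.log ((n / d : ℕ) : ℝ) - Real.log n / 2 = -(Real.log d - Real.log n / 2) := by
    intro d hd
    have hd0 : (d : ℝ) ≠ 0 := Nat.cast_ne_zero.mpr (Nat.ne_of_gt (Nat.pos_of_mem_divisors hd))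
    have hn0 : (n : ℝ) ≠ 0 := Nat.cast_ne_zero.mpr (Nat.mem_divisors.mp hd).2
    rw [Nat.cast_div (Nat.dvd_of_mem_divisors hd) hd0, Real.log_div hn0 hd0]
    ring
  have := Nat.sum_div_divisors n fun d => Real.log d - Real.log n / 2
  rw [sum_congr rfl hflip, sum_neg_distrib] at this
  linarith

theorem sum_divisors_log_sub_half_sq_prime_pow {p : ℕ} (hp : p.Prime) (k : ℕ) :
    ∑ d ∈ (p ^ k).divisors, (Real.log d - Real.log (p ^ k : ℕ) / 2) ^ 2
      = ((k : ℝ) + 1) * (Real.log p ^ 2 * (k * (k + 2) / 12)) := by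
  rw [Nat.sum_divisors_prime_pow hp]
  simp_rw [Nat.cast_pow, Real.log_pow]
  calc ∑ i ∈ range (k + 1), ((i : ℝ) * Real.log p - k * Real.log p / 2) ^ 2
      = Real.log p ^ 2 * ∑ i ∈ range (k + 1), ((i : ℝ) - k / 2) ^ 2 := by
        rw [mul_sum]; exact sum_congr rfl fun i _ => by ring
    _ = _ := by rw [sum_range_sub_sq]; push_cast; ring

theorem Nat.Coprime.sum_divisors_log_sub_half_sq_mul {a b : ℕ} (h : a.Coprime b) :
    ∑ d ∈ (a * b).divisors, (Real.log d - Real.log (a * b : ℕ) / 2) ^ 2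
      = (#b.divisors : ℝ) * ∑ x ∈ a.divisors, (Real.log x - Real.log a / 2) ^ 2
        + (#a.divisors : ℝ) * ∑ y ∈ b.divisors, (Real.log y - Real.log b / 2) ^ 2 := by
  rw [h.sum_divisors_mul_eq_sum_sum,
    ← sum_sum_add_sq_of_sum_eq_zero _ _ _ _ (sum_divisors_log_sub_half b)]
  refine sum_congr rfl fun x hx => sum_congr rfl fun y hy => ?_
  have hx0 : (x : ℝ) ≠ 0 := Nat.cast_ne_zero.mpr (Nat.ne_of_gt (Nat.pos_of_mem_divisors hx))
  have hy0 : (y : ℝ) ≠ 0 := Nat.cast_ne_zero.mpr (Nat.ne_of_gt (Nat.pos_of_mem_divisors hy))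
  have ha0 : (a : ℝ) ≠ 0 := Nat.cast_ne_zero.mpr (Nat.mem_divisors.mp hx).2
  have hb0 : (b : ℝ) ≠ 0 := Nat.cast_ne_zero.mpr (Nat.mem_divisors.mp hy).2
  push_cast
  rw [Real.log_mul hx0 hy0, Real.log_mul ha0 hb0]
  ring

theorem sum_divisors_log_sub_half_sq (n : ℕ) :
    ∑ d ∈ n.divisors, (Real.log d - Real.log n / 2) ^ 2
      = (#n.divisors : ℝ)
        * n.factorization.sum fun p α => Real.log p ^ 2 * (α * (α + 2) / 12) := by
  induction n using Nat.recOnPrimeCoprime with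
  | zero => simp
  | prime_pow p k hp =>
    rw [sum_divisors_log_sub_half_sq_prime_pow hp, hp.factorization_pow,
      Finsupp.sum_single_index (by simp), Nat.divisors_prime_pow hp]
    simp
  | coprime a b _ _ h iha ihb =>
    rw [h.sum_divisors_log_sub_half_sq_mul, iha, ihb, h.card_divisors_mul,
      Nat.factorization_mul_of_coprime h,
      Finsupp.sum_add_index_of_disjoint (by simpa using h.disjoint_primeFactors)]
    push_cast
    ring

theorem count_far_divisors_general (n : ℕ) (hn : 2 ≤ n) (δ : ℝ) (hδ0 : 0 < δ) :
    ((n.divisors.filter (fun d => δ * Real.log n ≤ |Real.log d - Real.log n / 2|)).card : ℝ)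
      ≤ 1 / (δ * Real.log n) ^ 2 * (tau n : ℝ)
          * ∑ p ∈ n.primeFactors,
              (Real.log (p ^ n.factorization p)) ^ 2
                * ((n.factorization p : ℝ) + 2) / (12 * (n.factorization p : ℝ)) := by
  have hlog : 0 < Real.log n := Real.log_pos (by exact_mod_cast hn)
  -- `d` ranges over `ℝ` in the statement: `n.divisors` is coerced to a `Finset ℝ` monadically.
  have hcast :
      (n.divisors.image fun d : ℕ => (d : ℝ)) = (do let a ← n.divisors; pure ↑a) := by
    simp [Finset.image]
  rw [← hcast, filter_image, card_image_of_injective _ Nat.cast_injective]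
  refine (card_filter_le_sum_sq_div _ _ (mul_pos hδ0 hlog)).trans_eq ?_
  have hterm : ∀ p ∈ n.primeFactors,
      Real.log p ^ 2 * (n.factorization p * (n.factorization p + 2) / 12)
        = Real.log (p ^ n.factorization p) ^ 2 * (n.factorization p + 2)
          / (12 * n.factorization p) := by
    intro p hp
    have hα : (n.factorization p : ℝ) ≠ 0 :=
      Nat.cast_ne_zero.mpr (Finsupp.mem_support_iff.mp (by simpa using hp))
    rw [Real.log_pow]
    field_simp
  rw [sum_divisors_log_sub_half_sq, Finsupp.sum, Nat.support_factorization,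
    sum_congr rfl hterm, tau]
  ring

theorem count_far_divisors (n : ℕ) (hn : 2 ≤ n) (δ : ℝ) (hδ0 : 0 < δ) (hδ : δ ≤ 1 / 2) :
    ((n.divisors.filter (fun d => δ * Real.log n ≤ |Real.log d - Real.log n / 2|)).card : ℝ)
      ≤ 1 / (δ * Real.log n) ^ 2 * (tau n : ℝ)
          * ∑ p ∈ n.primeFactors,
              (Real.log (p ^ n.factorization p)) ^ 2
                * ((n.factorization p : ℝ) + 2) / (12 * (n.factorization p : ℝ)) :=
  count_far_divisors_general n hn δ hδ0
end
end
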